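/- arXiv:1308.4599 — 3 statements merged into one kernel-verified Lean document; each statement's English description precedes it below -/
import Mathlib

section
/- Let G and H be simple graphs and let p be a function assigning to each vertex of G a (possibly empty) set of vertices of H, such that whenever u and v are adjacent in G, every x ∈ p(u) and every y ∈ p(v) satisfy x = y or x and y are adjacent in H. Let A and B be sets of vertices of G and let m be a natural number such that for every a ∈ A, b ∈ B, x ∈ p(a) and y ∈ p(b), every walk in H from x to y has length at least m. Then for every a ∈ A and b ∈ B, every walk in G from a to b whose length is strictly less than m contains in its support a vertex v with p(v) = ∅. -/
namespace SimpleGraph.Walk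

variable {V W : Type*} {G : SimpleGraph V} {H : SimpleGraph W}

theorem exists_walk_length_le_of_forall_nonempty {p : V → Set W}
    (hp : ∀ u v : V, G.Adj u v → ∀ x ∈ p u, ∀ y ∈ p v, x = y ∨ H.Adj x y)
    {a b : V} (w : G.Walk a b) (hw : ∀ v ∈ w.support, (p v).Nonempty)
    {x : W} (hx : x ∈ p a) :
    ∃ y ∈ p b, ∃ q : H.Walk x y, q.length ≤ w.length := by
  induction w generalizing x with
  | nil => exact ⟨x, hx, nil, le_rfl⟩
  | @cons a c b hac w ih =>
    obtain ⟨z, hz⟩ := hw c (List.mem_cons_of_mem _ w.start_mem_support)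
    obtain ⟨y, hy, q, hq⟩ := ih (fun v hv => hw v (List.mem_cons_of_mem _ hv)) hz
    rcases hp a c hac x hx z hz with rfl | hxz
    · exact ⟨y, hy, q, hq.trans (Nat.le_succ _)⟩
    · exact ⟨y, hy, cons hxz q, Nat.succ_le_succ hq⟩

end SimpleGraph.Walk

/-- Combinatorial core of the subsurface-projection lemma: if all projection
points of `A` and `B` are at walk-distance at least `m` in `H`, then every
walk in `G` from `A` to `B` of length `< m` has a vertex with empty
projection in its support. -/
theorem stmt_0 {V W : Type*} (G : SimpleGraph V) (H : SimpleGraph W)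
    (p : V → Set W)
    (hp : ∀ u v : V, G.Adj u v → ∀ x ∈ p u, ∀ y ∈ p v, x = y ∨ H.Adj x y)
    (A B : Set V) (m : ℕ)
    (hm : ∀ a ∈ A, ∀ b ∈ B, ∀ x ∈ p a, ∀ y ∈ p b,
      ∀ q : H.Walk x y, m ≤ q.length) :
    ∀ a ∈ A, ∀ b ∈ B, ∀ w : G.Walk a b, w.length < m →
      ∃ v ∈ w.support, p v = ∅ := by
  intro a ha b hb w hw
  by_contra! hnonempty
  obtain ⟨x, hx⟩ := hnonempty a w.start_mem_support
  obtain ⟨y, hy, q, hq⟩ := w.exists_walk_length_le_of_forall_nonempty hp hnonempty hx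
  exact (hm a ha b hb x hx y hy q).not_gt (hq.trans_lt hw)
end

section
/- Let G and H be simple graphs and let p be a function assigning to each vertex of G a (possibly empty) set of vertices of H, such that whenever u and v are adjacent in G, every x ∈ p(u) and every y ∈ p(v) satisfy x = y or x and y are adjacent in H. Let W be a walk in G from a to b such that p(v) is nonempty for every vertex v in the support of W. Then there exist x ∈ p(a), y ∈ p(b), and a walk in H from x to y whose length is at most the length of W. -/
namespace SimpleGraph.Walk

variable {V W : Type*} {G : SimpleGraph V} {H : SimpleGraph W}

theorem exists_walk_map_length_le (f : V → W) :
    ∀ {a b : V} (w : G.Walk a b),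
      (∀ d ∈ w.darts, f d.fst = f d.snd ∨ H.Adj (f d.fst) (f d.snd)) →
      ∃ q : H.Walk (f a) (f b), q.length ≤ w.length
  | _, _, nil, _ => ⟨nil, le_rfl⟩
  | _, _, cons huv w, hf => by
    obtain ⟨q, hq⟩ := exists_walk_map_length_le f w fun d hd => hf d (by simp [hd])
    rcases hf ⟨(_, _), huv⟩ (by simp) with heq | hadj
    · exact ⟨q.copy heq.symm rfl, by simp only [length_copy, length_cons]; omega⟩
    · exact ⟨cons hadj q, by simpa using hq⟩

end SimpleGraph.Walk

/-- The chain construction: a walk in `G` all of whose vertices have nonempty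
projection yields a walk in `H` between projection points of its endpoints,
of at most the same length. -/
theorem stmt_2 {V W : Type*} (G : SimpleGraph V) (H : SimpleGraph W)
    (p : V → Set W)
    (hp : ∀ u v : V, G.Adj u v → ∀ x ∈ p u, ∀ y ∈ p v, x = y ∨ H.Adj x y)
    (a b : V) (w : G.Walk a b)
    (hne : ∀ v ∈ w.support, (p v).Nonempty) :
    ∃ x ∈ p a, ∃ y ∈ p b, ∃ q : H.Walk x y, q.length ≤ w.length := by
  have : Nonempty W := (hne a w.start_mem_support).to_subtype.map Subtype.val
  have hf : ∀ v ∈ w.support, Classical.epsilon (· ∈ p v) ∈ p v := fun v hv =>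
    Classical.epsilon_spec (hne v hv)
  obtain ⟨q, hq⟩ := w.exists_walk_map_length_le (fun v => Classical.epsilon (· ∈ p v))
    fun d hd => hp _ _ d.adj _ (hf _ (w.dart_fst_mem_support_of_mem_darts hd)) _
      (hf _ (w.dart_snd_mem_support_of_mem_darts hd))
  exact ⟨_, hf a w.start_mem_support, _, hf b w.end_mem_support, q, hq⟩
end

section
/- Let G be a simple graph and let W be a walk in G from a to b. Suppose w_1, …, w_m are m pairwise distinct vertices of G, each contained in the support of W, such that no two of them are adjacent in G and each w_i is different from both a and b. Then the length of W is at least 2m. -/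
/-!
Peel off the first edge of the walk. This drops at most the start vertex from the independent
set `s`, and when the start does lie in `s`, the next vertex, being adjacent to it, does not.
So the invariant `2 * #s ≤ length + [start ∈ s]` passes through a structural induction, whose
base case is the trivial walk at `b ∉ s`.
-/

open Finset

namespace SimpleGraph.Walk

variable {V : Type*} [DecidableEq V] {G : SimpleGraph V}

theorem two_mul_card_le_length_add_ite {a b : V} (W : G.Walk a b) {s : Finset V}
    (hs : G.IsIndepSet s) (hsupp : ∀ v ∈ s, v ∈ W.support) (hb : b ∉ s) :
    2 * #s ≤ W.length + if a ∈ s then 1 else 0 := by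
  induction W generalizing s with
  | nil =>
    have : s = ∅ := eq_empty_of_forall_notMem fun v hv ↦ by
      obtain rfl : v = _ := by simpa using hsupp v hv
      exact hb hv
    simp [this]
  | @cons a c b hac W ih =>
    have htail : ∀ v ∈ s.erase a, v ∈ W.support := fun v hv ↦
      (List.mem_cons.mp (hsupp v (mem_of_mem_erase hv))).resolve_left (ne_of_mem_erase hv)
    have ih := ih (hs.mono (coe_subset.mpr (erase_subset a s))) htail
      fun h ↦ hb (mem_of_mem_erase h)
    rw [length_cons]
    by_cases ha : a ∈ s
    · have hc : c ∉ s.erase a := fun h ↦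
        hs ha (mem_of_mem_erase h) (ne_of_mem_erase h).symm hac
      have := card_erase_add_one ha
      rw [if_neg hc] at ih
      rw [if_pos ha]
      omega
    · rw [erase_eq_of_notMem ha] at ih
      rw [if_neg ha]
      split_ifs at ih <;> omega

theorem two_mul_card_le_length {a b : V} (W : G.Walk a b) {s : Finset V}
    (hs : G.IsIndepSet s) (hsupp : ∀ v ∈ s, v ∈ W.support) (ha : a ∉ s) (hb : b ∉ s) :
    2 * #s ≤ W.length := by
  simpa [ha] using W.two_mul_card_le_length_add_ite hs hsupp hb

end SimpleGraph.Walk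

/-- A walk from `a` to `b` passing through `m` pairwise distinct, pairwise
non-adjacent vertices, each different from `a` and `b`, has length at
least `2 * m`. -/
theorem stmt_3 {V : Type*} (G : SimpleGraph V) (a b : V) (W : G.Walk a b)
    (m : ℕ) (w : Fin m → V)
    (hinj : Function.Injective w)
    (hsupp : ∀ i : Fin m, w i ∈ W.support)
    (hnadj : ∀ i j : Fin m, i ≠ j → ¬ G.Adj (w i) (w j))
    (hends : ∀ i : Fin m, w i ≠ a ∧ w i ≠ b) :
    2 * m ≤ W.length := by
  classical
  have hcard : #(univ.image w) = m := by simp [card_image_of_injective _ hinj]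
  rw [← hcard]
  refine W.two_mul_card_le_length ?_ ?_ ?_ ?_
  · rw [coe_image, coe_univ, Set.image_univ]
    exact Pairwise.range_pairwise hnadj
  · simpa using hsupp
  · simpa using fun i ↦ (hends i).1
  · simpa using fun i ↦ (hends i).2
end
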